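/- arXiv:2401.11388 — 3 statements merged into one kernel-verified Lean document; each statement's English description precedes it below -/
import Mathlib

section
/- Let a and b be nonzero polynomials in R with totalDegree a ≠ totalDegree b. If g ∈ R satisfies a * σ(g) + b * g = 0, then g = 0; that is, the homogeneous first-order difference equation has only the zero polynomial solution when the coefficient degrees differ. -/
/-!
An algebra endomorphism sending each variable to a polynomial of total degree `≤ 1` does not
raise total degree; `σ` has such an inverse, so it preserves total degree. Over a domain total
degree is additive, so if `g ≠ 0` then `a * σ g = -(b * g)` forces `deg a = deg b`.
-/

open MvPolynomial

namespace MvPolynomial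

variable {R σ τ : Type*}

section CommSemiring

variable [CommSemiring R]

theorem totalDegree_aeval_le_mul {n : ℕ} (f : σ → MvPolynomial τ R)
    (hf : ∀ i, (f i).totalDegree ≤ n) (p : MvPolynomial σ R) :
    (aeval f p).totalDegree ≤ n * p.totalDegree := by
  classical
  conv_lhs => rw [p.as_sum, map_sum]
  refine totalDegree_finsetSum_le fun d hd => ?_
  rw [aeval_monomial, algebraMap_eq]
  refine (totalDegree_mul _ _).trans ?_
  rw [totalDegree_C, zero_add]
  calc (d.prod fun i e => f i ^ e).totalDegree
      ≤ ∑ i ∈ d.support, (f i ^ d i).totalDegree := totalDegree_finsetProd _ _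
    _ ≤ ∑ i ∈ d.support, n * d i := Finset.sum_le_sum fun i _ =>
        (totalDegree_pow _ _).trans (Nat.mul_le_mul_left _ (hf i) |>.trans_eq (mul_comm _ _))
    _ = n * d.degree := by rw [← Finset.mul_sum, Finsupp.degree_apply]
    _ ≤ n * p.totalDegree := Nat.mul_le_mul_left _ (le_totalDegree hd)

theorem totalDegree_smul_X_le_one (c : R) (i : σ) :
    (c • X i : MvPolynomial σ R).totalDegree ≤ 1 := by
  rw [X, smul_monomial, smul_eq_mul, mul_one]
  simpa using totalDegree_monomial_le (Finsupp.single i 1) c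

theorem totalDegree_smul_X_add_smul_X_le_one (c d : R) (i j : σ) :
    (c • X i + d • X j : MvPolynomial σ R).totalDegree ≤ 1 :=
  (totalDegree_add _ _).trans <|
    max_le (totalDegree_smul_X_le_one c i) (totalDegree_smul_X_le_one d j)

theorem totalDegree_algHom_le (φ : MvPolynomial σ R →ₐ[R] MvPolynomial τ R)
    (hφ : ∀ i, (φ (X i)).totalDegree ≤ 1) (p : MvPolynomial σ R) :
    (φ p).totalDegree ≤ p.totalDegree := by
  rw [aeval_unique φ]
  simpa using totalDegree_aeval_le_mul (φ ∘ X) hφ p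

theorem totalDegree_algHom_eq_of_leftInverse
    {φ : MvPolynomial σ R →ₐ[R] MvPolynomial τ R} {ψ : MvPolynomial τ R →ₐ[R] MvPolynomial σ R}
    (hψφ : Function.LeftInverse ψ φ) (hφ : ∀ i, (φ (X i)).totalDegree ≤ 1)
    (hψ : ∀ i, (ψ (X i)).totalDegree ≤ 1) (p : MvPolynomial σ R) :
    (φ p).totalDegree = p.totalDegree :=
  (totalDegree_algHom_le φ hφ p).antisymm <| by
    simpa only [hψφ p] using totalDegree_algHom_le ψ hψ (φ p)

end CommSemiring

theorem eq_zero_of_mul_map_add_mul_eq_zero [CommRing R] [IsDomain R]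
    {φ : MvPolynomial σ R →+* MvPolynomial σ R} (hinj : Function.Injective φ)
    (hφ : ∀ p, (φ p).totalDegree = p.totalDegree) {a b g : MvPolynomial σ R}
    (ha : a ≠ 0) (hb : b ≠ 0) (hdeg : a.totalDegree ≠ b.totalDegree)
    (h : a * φ g + b * g = 0) : g = 0 := by
  by_contra hg
  have hφg : φ g ≠ 0 := (map_ne_zero_iff φ hinj).mpr hg
  have := congrArg totalDegree (eq_neg_of_add_eq_zero_left h)
  rw [totalDegree_neg, totalDegree_mul_of_isDomain ha hφg,
    totalDegree_mul_of_isDomain hb hg, hφ] at this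
  exact hdeg (Nat.add_right_cancel this)

end MvPolynomial

section HouWeiShift

variable {F : Type*} [Field F]

/-- The inverse of `σ : α ↦ β, β ↦ u α + v β`. -/
noncomputable def houWeiShiftInv (u v : F) :
    MvPolynomial (Fin 2) F →ₐ[F] MvPolynomial (Fin 2) F :=
  aeval ![(-(v / u)) • X 0 + u⁻¹ • X 1, X 0]

theorem leftInverse_houWeiShiftInv {u v : F} (hu : u ≠ 0)
    {σ : MvPolynomial (Fin 2) F →ₐ[F] MvPolynomial (Fin 2) F}
    (hσα : σ (X 0) = X 1) (hσβ : σ (X 1) = u • X 0 + v • X 1) :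
    Function.LeftInverse (houWeiShiftInv u v) σ := by
  have : (houWeiShiftInv u v).comp σ = AlgHom.id F _ := by
    refine algHom_ext fun i => ?_
    fin_cases i
    · simp [houWeiShiftInv, hσα]
    · simp only [houWeiShiftInv, Fin.mk_one, AlgHom.comp_apply, hσβ, map_add, map_smul,
        aeval_X, Matrix.cons_val_zero, Matrix.cons_val_one, AlgHom.id_apply]
      rw [smul_add, smul_smul, smul_smul, mul_neg, mul_div_cancel₀ _ hu, mul_inv_cancel₀ hu,
        one_smul, neg_smul]
      abel
  exact DFunLike.congr_fun this

theorem totalDegree_houWeiShiftInv_X_le_one (u v : F) (i : Fin 2) :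
    (houWeiShiftInv u v (X i)).totalDegree ≤ 1 := by
  fin_cases i
  · simpa [houWeiShiftInv] using totalDegree_smul_X_add_smul_X_le_one (-(v / u)) u⁻¹ 0 1
  · simp [houWeiShiftInv]

end HouWeiShift

theorem unequal_degrees_only_zero_solution
    {F : Type*} [Field F] (u v : F) (hu : u ≠ 0)
    (σ : MvPolynomial (Fin 2) F →ₐ[F] MvPolynomial (Fin 2) F)
    (hσα : σ (X 0) = X 1)
    (hσβ : σ (X 1) = u • X 0 + v • X 1)
    (a b : MvPolynomial (Fin 2) F) (ha : a ≠ 0) (hb : b ≠ 0)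
    (hdeg : a.totalDegree ≠ b.totalDegree)
    (g : MvPolynomial (Fin 2) F)
    (heq : a * σ g + b * g = 0) :
    g = 0 := by
  have hleft := leftInverse_houWeiShiftInv hu hσα hσβ
  have hσX : ∀ i, (σ (X i)).totalDegree ≤ 1 := by
    intro i
    fin_cases i
    · simp [hσα]
    · simpa [hσβ] using totalDegree_smul_X_add_smul_X_le_one u v (0 : Fin 2) 1
  exact eq_zero_of_mul_map_add_mul_eq_zero (φ := σ.toRingHom) hleft.injective
    (totalDegree_algHom_eq_of_leftInverse hleft hσX (totalDegree_houWeiShiftInv_X_le_one u v))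
    ha hb hdeg heq
end

section
/- A polynomial g ∈ MvPolynomial (Fin 2) ℝ satisfies σ(g) = g if and only if g lies in the ℝ-subalgebra generated by the single element (α² + α*β − β²)²; that is, the fixed ring of σ on ℝ[α, β] is Algebra.adjoin ℝ {(α² + α*β − β²)²}. -/
/-!
Over `ℝ` the map `σ` diagonalises: with `φ, ψ` the roots of `x² = x + 1`, the linear forms
`u = α + φβ` and `v = α + ψβ` satisfy `σ u = φ u` and `σ v = ψ v`. In the coordinates `u, v`,
`σ` multiplies the monomial `uᵃvᵇ` by `φᵃψᵇ`, and since `ψ = -φ⁻¹` with `φ > 1` this is `1`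
exactly when `a = b` is even. Hence the fixed ring is generated by `(uv)²`, and
`uv = α² + αβ - β²`.
-/

open MvPolynomial

namespace AlgEquiv

variable {R A B : Type*} [CommSemiring R] [Semiring A] [Semiring B] [Algebra R A] [Algebra R B]

theorem symm_apply_mem_adjoin_iff (e : A ≃ₐ[R] B) (s : Set A) (b : B) :
    e.symm b ∈ Algebra.adjoin R s ↔ b ∈ Algebra.adjoin R (e '' s) := by
  rw [← AlgHom.coe_coe e, Algebra.adjoin_image, Subalgebra.mem_map]
  exact ⟨fun h ↦ ⟨_, h, e.apply_symm_apply b⟩, by rintro ⟨a, ha, rfl⟩; simpa using ha⟩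

theorem apply_eq_self_iff_of_comp_eq {f g : A →ₐ[R] A} (e : A ≃ₐ[R] A)
    (h : f.comp e = (e : A →ₐ[R] A).comp g) (a : A) : f a = a ↔ g (e.symm a) = e.symm a := by
  have hfa : f a = e (g (e.symm a)) := by simpa using DFunLike.congr_fun h (e.symm a)
  rw [hfa, ← e.eq_symm_apply]

end AlgEquiv

namespace MvPolynomial

section ScaleVars

variable {R σ : Type*} [CommSemiring R]

noncomputable def scaleVars (w : σ → R) : MvPolynomial σ R →ₐ[R] MvPolynomial σ R :=
  aeval fun i ↦ C (w i) * X i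

theorem scaleVars_monomial (w : σ → R) (u : σ →₀ ℕ) (r : R) :
    scaleVars w (monomial u r) = monomial u ((u.prod fun i k ↦ w i ^ k) * r) := by
  rw [scaleVars, aeval_monomial, algebraMap_eq, monomial_eq]
  simp only [mul_pow, Finsupp.prod_mul, C_mul, map_finsuppProd, map_pow]
  ring

theorem coeff_scaleVars (w : σ → R) (p : MvPolynomial σ R) (t : σ →₀ ℕ) :
    coeff t (scaleVars w p) = (t.prod fun i k ↦ w i ^ k) * coeff t p := by
  classical
  induction p using MvPolynomial.induction_on' with
  | monomial u r =>
    rw [scaleVars_monomial, coeff_monomial, coeff_monomial]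
    split_ifs with h
    · rw [h]
    · rw [mul_zero]
  | add p q hp hq => rw [map_add, coeff_add, coeff_add, hp, hq, mul_add]

theorem scaleVars_eq_self_iff [IsRightCancelMulZero R] (w : σ → R) (p : MvPolynomial σ R) :
    scaleVars w p = p ↔ ∀ t ∈ p.support, (t.prod fun i k ↦ w i ^ k) = 1 := by
  simp only [MvPolynomial.ext_iff, coeff_scaleVars, mem_support_iff]
  refine forall_congr' fun t ↦ ?_
  constructor
  · intro h hp; exact mul_right_cancel₀ hp (h.trans (one_mul _).symm)
  · intro h
    by_cases hp : coeff t p = 0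
    · rw [hp, mul_zero]
    · rw [h hp, one_mul]

theorem mem_of_forall_monomial_mem {A : Subalgebra R (MvPolynomial σ R)} {p : MvPolynomial σ R}
    (h : ∀ t ∈ p.support, monomial t 1 ∈ A) : p ∈ A := by
  rw [p.as_sum]
  refine Subalgebra.sum_mem _ fun t ht ↦ ?_
  rw [← mul_one (coeff t p), ← smul_eq_mul, ← smul_monomial]
  exact Subalgebra.smul_mem _ (h t ht) _

end ScaleVars

section LinearSubst

variable {K : Type*} [Field K]

noncomputable def linearSubstEquiv (a b : K) (hab : a ≠ b) :
    MvPolynomial (Fin 2) K ≃ₐ[K] MvPolynomial (Fin 2) K :=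
  have hdet : C (b - a)⁻¹ * (C b - C a) = (1 : MvPolynomial (Fin 2) K) := by
    rw [← C_sub, ← C_mul, inv_mul_cancel₀ (sub_ne_zero.2 hab.symm), C_1]
  AlgEquiv.ofAlgHom (aeval ![X 0 + C a * X 1, X 0 + C b * X 1])
    (aeval ![C (b - a)⁻¹ * (C b * X 0 - C a * X 1), C (b - a)⁻¹ * (X 1 - X 0)])
    (algHom_ext fun i ↦ by
      fin_cases i <;> simp only [AlgHom.comp_apply, aeval_X, map_mul, map_sub, aeval_C,
        algebraMap_eq, AlgHom.coe_id, id_eq, Matrix.cons_val_zero, Matrix.cons_val_one,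
        Fin.zero_eta, Fin.mk_one, Fin.isValue]
      · linear_combination X 0 * hdet
      · linear_combination X 1 * hdet)
    (algHom_ext fun i ↦ by
      fin_cases i <;> simp only [AlgHom.comp_apply, aeval_X, map_add, map_mul, aeval_C,
        algebraMap_eq, AlgHom.coe_id, id_eq, Matrix.cons_val_zero, Matrix.cons_val_one,
        Fin.zero_eta, Fin.mk_one, Fin.isValue]
      · linear_combination X 0 * hdet
      · linear_combination X 1 * hdet)

variable (a b : K) (hab : a ≠ b)

@[simp]
theorem linearSubstEquiv_X_zero : linearSubstEquiv a b hab (X 0) = X 0 + C a * X 1 := by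
  simp [linearSubstEquiv]

@[simp]
theorem linearSubstEquiv_X_one : linearSubstEquiv a b hab (X 1) = X 0 + C b * X 1 := by
  simp [linearSubstEquiv]

end LinearSubst

end MvPolynomial

open scoped goldenRatio

namespace Real

theorem goldenRatio_pow_mul_goldenConj_pow_eq_one_iff {a b : ℕ} :
    φ ^ a * ψ ^ b = 1 ↔ a = b ∧ Even a := by
  constructor
  · intro h
    have hsign : φ ^ a * (-1) ^ b = φ ^ b := by
      rw [← goldenRatio_mul_goldenConj, mul_pow, ← mul_assoc, mul_comm (φ ^ a), mul_assoc, h,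
        mul_one]
    obtain rfl : a = b := by
      refine pow_right_injective₀ goldenRatio_pos one_lt_goldenRatio.ne' ?_
      simpa [abs_of_pos goldenRatio_pos] using congrArg abs hsign
    refine ⟨rfl, (neg_one_pow_eq_one_iff_even (R := ℝ) (by norm_num)).1 ?_⟩
    exact mul_left_cancel₀ (pow_ne_zero a goldenRatio_ne_zero) (hsign.trans (mul_one _).symm)
  · rintro ⟨rfl, ha⟩
    rw [← mul_pow, goldenRatio_mul_goldenConj, ha.neg_one_pow]

theorem goldenRatio_ne_goldenConj : φ ≠ ψ :=
  (goldenConj_neg.trans goldenRatio_pos).ne'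

end Real

open Real

theorem scaleVars_goldenRatio_goldenConj_eq_self_iff (p : MvPolynomial (Fin 2) ℝ) :
    scaleVars ![φ, ψ] p = p ↔ p ∈ Algebra.adjoin ℝ {(X 0 * X 1) ^ 2} := by
  constructor
  · rw [scaleVars_eq_self_iff]
    refine fun h ↦ mem_of_forall_monomial_mem fun t ht ↦ ?_
    have ht1 := h t ht
    rw [Finsupp.prod_fintype _ _ fun _ ↦ pow_zero _, Fin.prod_univ_two] at ht1
    obtain ⟨h01, k, hk⟩ := goldenRatio_pow_mul_goldenConj_pow_eq_one_iff.1 ht1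
    have hmon : monomial t (1 : ℝ) = ((X 0 * X 1) ^ 2) ^ k := by
      rw [monomial_fin_two, ← h01, hk, C_1]
      ring
    rw [hmon]
    exact pow_mem (Algebra.subset_adjoin (Set.mem_singleton _)) k
  · refine fun hp ↦ Algebra.adjoin_le (S := AlgHom.equalizer _ (AlgHom.id ℝ _)) ?_ hp
    rintro _ rfl
    have hC : (C φ * C ψ : MvPolynomial (Fin 2) ℝ) = -1 := by
      rw [← C_mul, goldenRatio_mul_goldenConj, C_neg, C_1]
    simp only [SetLike.mem_coe, AlgHom.mem_equalizer, AlgHom.id_apply, map_pow, map_mul,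
      scaleVars, aeval_X, Matrix.cons_val_zero, Matrix.cons_val_one]
    linear_combination (C φ * C ψ - 1) * (X 0 * X 1) ^ 2 * hC

noncomputable def goldenSubst : MvPolynomial (Fin 2) ℝ ≃ₐ[ℝ] MvPolynomial (Fin 2) ℝ :=
  linearSubstEquiv φ ψ goldenRatio_ne_goldenConj

@[simp]
theorem goldenSubst_X_zero : goldenSubst (X 0) = X 0 + C φ * X 1 :=
  linearSubstEquiv_X_zero ..

@[simp]
theorem goldenSubst_X_one : goldenSubst (X 1) = X 0 + C ψ * X 1 :=
  linearSubstEquiv_X_one ..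

theorem comp_goldenSubst (σ : MvPolynomial (Fin 2) ℝ →ₐ[ℝ] MvPolynomial (Fin 2) ℝ)
    (hσα : σ (X 0) = X 1) (hσβ : σ (X 1) = X 0 + X 1) :
    σ.comp goldenSubst =
      (goldenSubst : MvPolynomial (Fin 2) ℝ →ₐ[ℝ] _).comp (scaleVars ![φ, ψ]) := by
  have hσC (r : ℝ) : σ (C r) = C r := σ.commutes r
  have hτC (r : ℝ) : goldenSubst (C r) = C r := goldenSubst.commutes r
  have hφ : (C φ : MvPolynomial (Fin 2) ℝ) ^ 2 = C φ + 1 := by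
    rw [← C_pow, goldenRatio_sq, C_add, C_1]
  have hψ : (C ψ : MvPolynomial (Fin 2) ℝ) ^ 2 = C ψ + 1 := by
    rw [← C_pow, goldenConj_sq, C_add, C_1]
  refine algHom_ext fun i ↦ ?_
  fin_cases i <;> simp only [AlgHom.comp_apply, AlgEquiv.coe_toAlgHom, scaleVars, aeval_X,
    map_add, map_mul, goldenSubst_X_zero, goldenSubst_X_one, hσα, hσβ, hσC, hτC,
    Matrix.cons_val_zero, Matrix.cons_val_one, Fin.zero_eta, Fin.mk_one, Fin.isValue]
  · linear_combination -X 1 * hφ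
  · linear_combination -X 1 * hψ

theorem goldenSubst_X_mul_X : goldenSubst (X 0 * X 1) = X 0 ^ 2 + X 0 * X 1 - X 1 ^ 2 := by
  have hsum : (C φ + C ψ : MvPolynomial (Fin 2) ℝ) = 1 := by
    rw [← C_add, goldenRatio_add_goldenConj, C_1]
  have hprod : (C φ * C ψ : MvPolynomial (Fin 2) ℝ) = -1 := by
    rw [← C_mul, goldenRatio_mul_goldenConj, C_neg, C_1]
  rw [map_mul, goldenSubst_X_zero, goldenSubst_X_one]
  linear_combination X 0 * X 1 * hsum + X 1 ^ 2 * hprod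

theorem fibonacci_fixed_ring
    (σ : MvPolynomial (Fin 2) ℝ →ₐ[ℝ] MvPolynomial (Fin 2) ℝ)
    (hσα : σ (X 0) = X 1)
    (hσβ : σ (X 1) = X 0 + X 1)
    (g : MvPolynomial (Fin 2) ℝ) :
    σ g = g ↔
      g ∈ Algebra.adjoin ℝ
        ({((X 0) ^ 2 + X 0 * X 1 - (X 1) ^ 2) ^ 2} : Set (MvPolynomial (Fin 2) ℝ)) := by
  rw [AlgEquiv.apply_eq_self_iff_of_comp_eq goldenSubst (comp_goldenSubst σ hσα hσβ),
    scaleVars_goldenRatio_goldenConj_eq_self_iff, AlgEquiv.symm_apply_mem_adjoin_iff,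
    Set.image_singleton, map_pow, goldenSubst_X_mul_X]
end

section
/- In MvPolynomial (Fin 2) ℝ with the Pell difference structure, a polynomial g satisfies (α² + α + 2β) * σ(g) + (β² + 2β) * g = α³ + β³ + α²β − αβ² + α² + 4β² + αβ if and only if g = β − α; that is, β − α is the unique polynomial solution of this first-order difference equation. -/
/-!
Since `β - α` is a particular solution, it suffices that `A * σ h + B * h = 0`, with
`A = α² + α + 2β` and `B = β (β + 2)`, forces `h = 0`. The polynomial `A` is prime (it is
linear in `β`) of total degree `2`, and `σ` is an invertible linear change of variables, so it
preserves primality and does not lower total degree; a prime of total degree at least `2` divides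
neither `β` nor `β + 2`. Hence `A ∣ h`, and `h = A * k` where `k` solves the same equation with
`σ A` in place of `A`. Strict divisibility is well-founded, so this descent ends with `h = 0`.
-/

open MvPolynomial

theorem eq_zero_of_mul_map_add_mul_eq_zero {R F : Type*} [CommRing R] [IsDomain R]
    [WfDvdMonoid R] [FunLike F R R] [MulHomClass F R R] (σ : F) {b : R} {S : Set R}
    (hprime : ∀ a ∈ S, Prime a) (hndvd : ∀ a ∈ S, ¬ a ∣ b) (hmaps : Set.MapsTo σ S S)
    (h : R) :
    ∀ a ∈ S, a * σ h + b * h = 0 → h = 0 := by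
  induction h using (wellFounded_dvdNotUnit (α := R)).induction with
  | _ h ih =>
    intro a ha heq
    have hdvd : a ∣ b * h := ⟨-σ h, by linear_combination heq⟩
    obtain ⟨k, rfl⟩ := ((hprime a ha).dvd_or_dvd hdvd).resolve_left (hndvd a ha)
    have hk : σ a * σ k + b * k = 0 := by
      refine (mul_eq_zero.mp ?_).resolve_left (hprime a ha).ne_zero
      rw [map_mul] at heq
      linear_combination heq
    obtain rfl : k = 0 := by
      by_contra hk0
      exact hk0 (ih k ⟨hk0, a, (hprime a ha).not_isUnit, mul_comm _ _⟩ (σ a) (hmaps ha) hk)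
    exact mul_zero a

namespace MvPolynomial

variable {ι κ R : Type*}

theorem totalDegree_aeval_le_of_isHomogeneous [CommSemiring R] {g : ι → MvPolynomial κ R}
    (hg : ∀ i, (g i).IsHomogeneous 1) (p : MvPolynomial ι R) :
    (aeval g p).totalDegree ≤ p.totalDegree := by
  conv_lhs => rw [← sum_homogeneousComponent p, map_sum]
  refine (totalDegree_finsetSum _ _).trans (Finset.sup_le fun i hi => ?_)
  have := ((homogeneousComponent_isHomogeneous i p).aeval g hg).totalDegree_le
  rw [one_mul] at this
  exact this.trans (Nat.lt_succ_iff.mp (Finset.mem_range.mp hi))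

theorem not_dvd_mul_of_totalDegree_lt [CommRing R] [IsDomain R] {a p q : MvPolynomial ι R}
    (ha : Prime a) (hp : p ≠ 0) (hq : q ≠ 0) (hpa : p.totalDegree < a.totalDegree)
    (hqa : q.totalDegree < a.totalDegree) : ¬ a ∣ p * q := fun h =>
  (ha.dvd_or_dvd h).elim (fun h => (totalDegree_le_of_dvd_of_isDomain h hp).not_gt hpa)
    fun h => (totalDegree_le_of_dvd_of_isDomain h hq).not_gt hqa

end MvPolynomial

section PellShift

variable (R : Type*) [CommRing R]

noncomputable def pellShiftInv : MvPolynomial (Fin 2) R →ₐ[R] MvPolynomial (Fin 2) R :=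
  aeval ![X 1 - 2 * X 0, X 0]

variable {R} {σ : MvPolynomial (Fin 2) R →ₐ[R] MvPolynomial (Fin 2) R}

theorem pellShiftInv_comp (hσα : σ (X 0) = X 1) (hσβ : σ (X 1) = X 0 + 2 * X 1) :
    (pellShiftInv R).comp σ = AlgHom.id R _ := by
  refine algHom_ext fun i => ?_
  fin_cases i <;> simp [pellShiftInv, hσα, hσβ, map_ofNat]

theorem comp_pellShiftInv (hσα : σ (X 0) = X 1) (hσβ : σ (X 1) = X 0 + 2 * X 1) :
    σ.comp (pellShiftInv R) = AlgHom.id R _ := by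
  refine algHom_ext fun i => ?_
  fin_cases i <;> simp [pellShiftInv, hσα, hσβ, map_ofNat]

theorem Prime.map_pellShift (hσα : σ (X 0) = X 1) (hσβ : σ (X 1) = X 0 + 2 * X 1)
    {a : MvPolynomial (Fin 2) R} (ha : Prime a) : Prime (σ a) :=
  (MulEquiv.prime_iff (AlgEquiv.ofAlgHom σ _ (comp_pellShiftInv hσα hσβ)
    (pellShiftInv_comp hσα hσβ))).mpr ha

theorem totalDegree_le_totalDegree_pellShift (hσα : σ (X 0) = X 1)
    (hσβ : σ (X 1) = X 0 + 2 * X 1) (a : MvPolynomial (Fin 2) R) :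
    a.totalDegree ≤ (σ a).totalDegree := by
  calc a.totalDegree = (pellShiftInv R (σ a)).totalDegree := by
        rw [← AlgHom.comp_apply, pellShiftInv_comp hσα hσβ, AlgHom.id_apply]
    _ ≤ (σ a).totalDegree := totalDegree_aeval_le_of_isHomogeneous (fun i => by
        fin_cases i
        · exact (isHomogeneous_X R 1).sub ((isHomogeneous_X R 0).C_mul 2)
        · exact isHomogeneous_X R 0) _

end PellShift

theorem prime_X_zero_sq_add_X_zero_add_two_mul_X_one :
    Prime (X 0 ^ 2 + X 0 + 2 * X 1 : MvPolynomial (Fin 2) ℝ) := by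
  have hirr : Irreducible (C 2 * X 1 + (X 0 ^ 2 + X 0) : MvPolynomial (Fin 2) ℝ) := by
    refine irreducible_mul_X_add _ _ 1 (by simp) (by simp) (fun h => ?_) ?_
    · rcases Finset.mem_union.mp (vars_add_subset _ _ h) with h | h
      · simpa [vars_X] using vars_pow _ 2 h
      · simp [vars_X] at h
    · exact ((IsUnit.mk0 (2 : ℝ) two_ne_zero).map C).isRelPrime_left
  rw [show (C 2 : MvPolynomial (Fin 2) ℝ) = 2 from map_ofNat C 2] at hirr
  rw [show (X 0 ^ 2 + X 0 + 2 * X 1 : MvPolynomial (Fin 2) ℝ) = 2 * X 1 + (X 0 ^ 2 + X 0) by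
    ring]
  exact hirr.prime

theorem two_le_totalDegree_X_zero_sq_add_X_zero_add_two_mul_X_one :
    2 ≤ (X 0 ^ 2 + X 0 + 2 * X 1 : MvPolynomial (Fin 2) ℝ).totalDegree := by
  have h := le_totalDegree (s := Finsupp.single 0 2)
    (p := (X 0 ^ 2 + X 0 + 2 * X 1 : MvPolynomial (Fin 2) ℝ)) (by
      rw [← map_ofNat C 2]
      simp [coeff_X_pow, coeff_X, coeff_C_mul, Finsupp.single_eq_single_iff])
  simpa using h

theorem not_dvd_X_one_sq_add_two_mul_X_one {a : MvPolynomial (Fin 2) ℝ} (ha : Prime a)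
    (h2 : 2 ≤ a.totalDegree) :
    ¬ a ∣ X 1 ^ 2 + 2 * X 1 := by
  rw [show (X 1 ^ 2 + 2 * X 1 : MvPolynomial (Fin 2) ℝ) = X 1 * (X 1 + C 2) by
    rw [map_ofNat]; ring]
  refine not_dvd_mul_of_totalDegree_lt ha (X_ne_zero 1) (fun h => ?_) (by simp; omega) ?_
  · simpa using congrArg (eval 0) h
  · calc (X 1 + C 2 : MvPolynomial (Fin 2) ℝ).totalDegree ≤ 1 := by
          refine (totalDegree_add _ _).trans ?_; simp
      _ < a.totalDegree := h2

theorem pell_unique_polynomial_solution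
    (σ : MvPolynomial (Fin 2) ℝ →ₐ[ℝ] MvPolynomial (Fin 2) ℝ)
    (hσα : σ (X 0) = X 1)
    (hσβ : σ (X 1) = X 0 + 2 * X 1)
    (g : MvPolynomial (Fin 2) ℝ) :
    ((X 0) ^ 2 + X 0 + 2 * X 1) * σ g + ((X 1) ^ 2 + 2 * X 1) * g =
        (X 0) ^ 3 + (X 1) ^ 3 + (X 0) ^ 2 * X 1 - X 0 * (X 1) ^ 2 +
          (X 0) ^ 2 + 4 * (X 1) ^ 2 + X 0 * X 1 ↔
      g = X 1 - X 0 := by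
  constructor
  · intro hg
    have hhom : (X 0 ^ 2 + X 0 + 2 * X 1) * σ (g - (X 1 - X 0)) +
        (X 1 ^ 2 + 2 * X 1) * (g - (X 1 - X 0)) = 0 := by
      rw [map_sub, map_sub, hσα, hσβ]
      linear_combination hg
    let S : Set (MvPolynomial (Fin 2) ℝ) := {a | Prime a ∧ 2 ≤ a.totalDegree}
    have hmaps : Set.MapsTo σ S S := fun a ha =>
      ⟨ha.1.map_pellShift hσα hσβ,
        ha.2.trans (totalDegree_le_totalDegree_pellShift hσα hσβ a)⟩
    refine sub_eq_zero.mp (eq_zero_of_mul_map_add_mul_eq_zero σ (fun a ha => ha.1)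
      (fun a ha => not_dvd_X_one_sq_add_two_mul_X_one ha.1 ha.2) hmaps _ _ ?_ hhom)
    exact ⟨prime_X_zero_sq_add_X_zero_add_two_mul_X_one,
      two_le_totalDegree_X_zero_sq_add_X_zero_add_two_mul_X_one⟩
  · rintro rfl
    rw [map_sub, hσα, hσβ]
    ring
end
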